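/- arXiv:1303.4966 — 2 statements merged into one kernel-verified Lean document; each statement's English description precedes it below -/
import Mathlib

section
/- Let G be a finitely generated nilpotent group of class at most 2 (i.e., G' ⊆ Z(G)) such that G' is finite and the abelianization G/G' is torsion-free, say free abelian of rank b. Then IA(G) is isomorphic to Inn(G) if and only if G/Z(G) is isomorphic to the direct product of b copies of G'. -/
/-- The group of IA-automorphisms of `G`: automorphisms inducing the identity on the
abelianization `G/G'`. -/
def IA (G : Type*) [Group G] : Subgroup (MulAut G) where
  carrier := {α | ∀ g : G, g⁻¹ * α g ∈ commutator G}
  one_mem' := by intro g; simp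
  mul_mem' := by
    intro α β hα hβ g
    have h : g⁻¹ * (α * β) g = (g⁻¹ * β g) * ((β g)⁻¹ * α (β g)) := by
      simp [MulAut.mul_apply, mul_assoc]
    rw [Set.mem_setOf_eq] at *
    rw [h]
    exact mul_mem (hβ g) (hα (β g))
  inv_mem' := by
    intro α hα g
    have h := hα (α⁻¹ g)
    rw [MulAut.apply_inv_self] at h
    simpa using inv_mem h

/-- The group of inner automorphisms of `G`. -/
def Inn (G : Type*) [Group G] : Subgroup (MulAut G) :=
  (MulAut.conj : G →* MulAut G).range

/-!
For a group of class at most 2, `α ↦ (g G' ↦ g⁻¹ α(g))` is an isomorphism from `IA(G)` onto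
`Hom(G/G', G')`: the displacement `g⁻¹ α(g)` is central, which makes it a homomorphism, and
conversely `g ↦ g φ(g)` is an automorphism for every homomorphism `φ : G → G'` killing `G'`.
With `G/G' ≅ ℤ^b` this gives `IA(G) ≅ G'^b`, while `Inn(G) ≅ G/Z(G)`; so `IA(G) ≅ Inn(G)` iff
`G/Z(G) ≅ G'^b`.
-/

open scoped commutatorElement IsMulCommutative

section

open Subgroup

variable {G : Type*} [Group G]

lemma commutatorElement_mul_mem_center {x y c d : G} (hc : c ∈ center G) (hd : d ∈ center G) :
    ⁅x * c, y * d⁆ = ⁅x, y⁆ := by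
  have hc' := mem_center_iff.mp hc
  have hd' := mem_center_iff.mp hd
  have e1 : c * (y * d) * c⁻¹ = y * d := by rw [← hc' (y * d)]; group
  have e2 : d * x⁻¹ * d⁻¹ = x⁻¹ := by rw [← hd' x⁻¹]; group
  calc ⁅x * c, y * d⁆ = x * (c * (y * d) * c⁻¹) * x⁻¹ * (y * d)⁻¹ := by group
    _ = x * (y * d) * x⁻¹ * (y * d)⁻¹ := by rw [e1]
    _ = x * y * (d * x⁻¹ * d⁻¹) * y⁻¹ := by group
    _ = ⁅x, y⁆ := by rw [e2]; group

lemma isMulCommutative_of_le_center {H : Subgroup G} (hH : H ≤ center G) : IsMulCommutative H :=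
  ⟨⟨fun a b => Subtype.ext (mem_center_iff.mp (hH b.2) a)⟩⟩

def MulAut.ofCentralHom (φ : G →* G) (hφ : ∀ g, φ g ∈ center G) (hφφ : ∀ g, φ (φ g) = 1) :
    MulAut G where
  toFun g := g * φ g
  invFun g := g * (φ g)⁻¹
  left_inv g := by simp only [map_mul, hφφ, mul_one, mul_inv_cancel_right]
  right_inv g := by simp only [map_mul, map_inv, hφφ, inv_one, mul_one, inv_mul_cancel_right]
  map_mul' g h := by
    simp only [map_mul]
    calc g * h * (φ g * φ h) = g * (h * φ g) * φ h := by group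
      _ = g * (φ g * h) * φ h := by rw [mem_center_iff.mp (hφ g) h]
      _ = g * φ g * (h * φ h) := by group

lemma MulAut.ker_conj : (MulAut.conj : G →* MulAut G).ker = center G := by
  ext g
  simp [MonoidHom.mem_ker, mem_center_iff, MulEquiv.ext_iff, eq_mul_inv_iff_mul_eq, eq_comm]

noncomputable def innMulEquivQuotientCenter (G : Type*) [Group G] : Inn G ≃* G ⧸ center G :=
  ((QuotientGroup.quotientMulEquivOfEq MulAut.ker_conj).symm.trans
    (QuotientGroup.quotientKerEquivRange (MulAut.conj : G →* MulAut G))).symm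

def multiplicativePiIntHomEquiv (ι A : Type*) [Fintype ι] [DecidableEq ι] [CommGroup A] :
    (Multiplicative (ι → ℤ) →* A) ≃* (ι → A) :=
  { AddMonoidHom.toMultiplicativeLeft.symm.trans
      ((addMonoidHomLequivInt ℤ).toEquiv.trans (LinearEquiv.piRing ℤ (Additive A) ι ℤ).toEquiv) with
    map_mul' := fun _ _ => rfl }

namespace IA

variable (h2 : commutator G ≤ center G)
include h2

lemma apply_eq_self_of_mem_commutator (α : IA G) {g : G} (hg : g ∈ commutator G) :
    (α : MulAut G) g = g := by
  suffices commutator G ≤ MonoidHom.eqLocus (α : MulAut G).toMonoidHom (MonoidHom.id G) from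
    this hg
  rw [commutator_def, commutator_le]
  intro x _ y _
  show (α : MulAut G) ⁅x, y⁆ = ⁅x, y⁆
  rw [map_commutatorElement, ← mul_inv_cancel_left x ((α : MulAut G) x),
    ← mul_inv_cancel_left y ((α : MulAut G) y)]
  exact commutatorElement_mul_mem_center (h2 (α.2 x)) (h2 (α.2 y))

def displacement (α : IA G) : G →* commutator G where
  toFun g := ⟨g⁻¹ * (α : MulAut G) g, α.2 g⟩
  map_one' := by ext; simp
  map_mul' g h := by
    ext
    show (g * h)⁻¹ * (α : MulAut G) (g * h) = (g⁻¹ * (α : MulAut G) g) * (h⁻¹ * (α : MulAut G) h)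
    calc (g * h)⁻¹ * (α : MulAut G) (g * h)
        = h⁻¹ * (g⁻¹ * (α : MulAut G) g) * (α : MulAut G) h := by rw [map_mul]; group
      _ = (g⁻¹ * (α : MulAut G) g) * (h⁻¹ * (α : MulAut G) h) := by
          rw [mem_center_iff.mp (h2 (α.2 g)) h⁻¹]; group

variable [IsMulCommutative (commutator G)]

def toHom : IA G →* ((G ⧸ commutator G) →* commutator G) where
  toFun α := QuotientGroup.lift (commutator G) (displacement h2 α) fun g hg =>
    Subtype.ext (by simp [displacement, apply_eq_self_of_mem_commutator h2 α hg])
  map_one' := by ext g; simp [displacement]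
  map_mul' α β := by
    ext g
    show g⁻¹ * (α : MulAut G) ((β : MulAut G) g)
      = (g⁻¹ * (α : MulAut G) g) * (g⁻¹ * (β : MulAut G) g)
    rw [← mul_inv_cancel_left g ((β : MulAut G) g), map_mul,
      apply_eq_self_of_mem_commutator h2 α (β.2 g)]
    group

lemma toHom_apply_mk (α : IA G) (g : G) :
    (toHom h2 α (g : G ⧸ commutator G) : G) = g⁻¹ * (α : MulAut G) g :=
  rfl

lemma toHom_injective : Function.Injective (toHom h2) := by
  intro α β h
  ext g
  simpa [toHom_apply_mk] using congrArg Subtype.val (DFunLike.congr_fun h (g : G ⧸ commutator G))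

lemma toHom_surjective : Function.Surjective (toHom h2) := by
  intro F
  let φ : G →* G := (commutator G).subtype.comp (F.comp (QuotientGroup.mk' (commutator G)))
  have hφ : ∀ g, φ g ∈ commutator G := fun g => (F g).2
  have hφφ : ∀ g, φ (φ g) = 1 := fun g => by
    change ((F (φ g : G ⧸ commutator G)) : G) = 1
    rw [(QuotientGroup.eq_one_iff (φ g)).mpr (hφ g), map_one, OneMemClass.coe_one]
  refine ⟨⟨MulAut.ofCentralHom φ (fun g => h2 (hφ g)) hφφ, fun g => ?_⟩, ?_⟩
  · simpa [MulAut.ofCentralHom] using hφ g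
  · ext g
    simp [toHom_apply_mk, MulAut.ofCentralHom, φ]

noncomputable def mulEquivHom : IA G ≃* ((G ⧸ commutator G) →* commutator G) :=
  MulEquiv.ofBijective (toHom h2) ⟨toHom_injective h2, toHom_surjective h2⟩

end IA

end

theorem IA_iso_Inn_iff_of_finite_commutator_general (G : Type*) [Group G]
    (h2 : commutator G ≤ Subgroup.center G) (b : ℕ)
    (hab : Nonempty ((G ⧸ commutator G) ≃* Multiplicative (Fin b → ℤ))) :
    Nonempty (IA G ≃* Inn G) ↔
      Nonempty ((G ⧸ Subgroup.center G) ≃* (Fin b → commutator G)) := by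
  have := isMulCommutative_of_le_center h2
  obtain ⟨e⟩ := hab
  let ia : IA G ≃* (Fin b → commutator G) :=
    (IA.mulEquivHom h2).trans ((MulEquiv.monoidHomCongrLeft e).trans
      (multiplicativePiIntHomEquiv (Fin b) (commutator G)))
  let inn := innMulEquivQuotientCenter G
  exact ⟨fun ⟨i⟩ => ⟨(inn.symm.trans i.symm).trans ia⟩,
    fun ⟨j⟩ => ⟨(ia.trans j.symm).trans inn.symm⟩⟩

/-- For a finitely generated nilpotent group `G` of class at most 2 with `G'` finite and
`G/G'` free abelian of rank `b`, `IA(G) ≅ Inn(G)` iff `G/Z(G)` is a direct product of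
`b` copies of `G'`. -/
theorem IA_iso_Inn_iff_of_finite_commutator (G : Type*) [Group G] [Group.FG G]
    (h2 : commutator G ≤ Subgroup.center G) [Finite (commutator G)] (b : ℕ)
    (hab : Nonempty ((G ⧸ commutator G) ≃* Multiplicative (Fin b → ℤ))) :
    Nonempty (IA G ≃* Inn G) ↔
      Nonempty ((G ⧸ Subgroup.center G) ≃* (Fin b → commutator G)) :=
  IA_iso_Inn_iff_of_finite_commutator_general G h2 b hab
end

section
/- Let G be a torsion-free nilpotent group of class at most 2 (i.e., G' ⊆ Z(G)) that can be generated by 2 elements. Then IA(G) is isomorphic to Inn(G). -/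
/-- A monoid is torsion-free if its only element of finite order is the identity
(the definition `Monoid.IsTorsionFree` of the older Mathlib, since removed). -/
def Monoid.IsTorsionFree (G : Type*) [Monoid G] : Prop :=
  ∀ g : G, g ≠ 1 → ¬IsOfFinOrder g

open scoped commutatorElement

section

variable {G : Type*} [Group G]

theorem commutatorElement_mem_commutator (x y : G) : ⁅x, y⁆ ∈ commutator G :=
  Subgroup.commutator_mem_commutator (Subgroup.mem_top x) (Subgroup.mem_top y)

theorem MulAut.conj_apply_eq_commutatorElement_mul (g x : G) :
    MulAut.conj g x = ⁅g, x⁆ * x := by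
  rw [MulAut.conj_apply, commutatorElement_def]
  group

theorem Inn_le_IA : Inn G ≤ IA G := by
  rintro _ ⟨g, rfl⟩ x
  have hx : x⁻¹ * MulAut.conj g x = ⁅x⁻¹, g⁆ := by
    rw [MulAut.conj_apply, commutatorElement_def]
    group
  rw [hx]
  exact commutatorElement_mem_commutator x⁻¹ g

theorem commute_commutatorElement (h2 : commutator G ≤ Subgroup.center G) (x y g : G) :
    Commute ⁅x, y⁆ g :=
  ((Subgroup.mem_center_iff.mp (h2 (commutatorElement_mem_commutator x y))) g).symm

def commutatorLeftHom (h2 : commutator G ≤ Subgroup.center G) (y : G) : G →* G where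
  toFun x := ⁅x, y⁆
  map_one' := commutatorElement_one_left y
  map_mul' x z := by
    rw [commutatorElement_mul_left_eq_conj_mul, ← (commute_commutatorElement h2 z y x).eq,
      mul_inv_cancel_right]
    exact (commute_commutatorElement h2 z y ⁅x, y⁆).eq

def commutatorRightHom (h2 : commutator G ≤ Subgroup.center G) (x : G) : G →* G where
  toFun y := ⁅x, y⁆
  map_one' := commutatorElement_one_right x
  map_mul' y z := by
    simp only [commutatorElement_mul_right_eq_mul_conj, mul_assoc,
      (commute_commutatorElement h2 x z y⁻¹).eq, mul_inv_cancel_left]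

theorem commutatorElement_zpow_mul_zpow_left (h2 : commutator G ≤ Subgroup.center G)
    (x y z : G) (i j : ℤ) : ⁅x ^ i * y ^ j, z⁆ = ⁅x, z⁆ ^ i * ⁅y, z⁆ ^ j := by
  show commutatorLeftHom h2 z (x ^ i * y ^ j) =
    commutatorLeftHom h2 z x ^ i * commutatorLeftHom h2 z y ^ j
  rw [map_mul, map_zpow, map_zpow]

theorem commutator_le_zpowers_of_closure_pair_eq_top (h2 : commutator G ≤ Subgroup.center G)
    {a b : G} (hab : Subgroup.closure {a, b} = ⊤) : commutator G ≤ Subgroup.zpowers ⁅a, b⁆ := by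
  have mem_of_generators {H : Subgroup G} (hH : ({a, b} : Set G) ⊆ H) (x : G) : x ∈ H :=
    (Subgroup.closure_le H).2 hH (hab ▸ Subgroup.mem_top x)
  have on_generators : ∀ u ∈ ({a, b} : Set G), ∀ v ∈ ({a, b} : Set G),
      ⁅u, v⁆ ∈ Subgroup.zpowers ⁅a, b⁆ := by
    rintro u (rfl | rfl) v (rfl | rfl)
    · rw [commutatorElement_self]; exact one_mem _
    · exact Subgroup.mem_zpowers _
    · rw [← inv_mem_iff, commutatorElement_inv]; exact Subgroup.mem_zpowers _
    · rw [commutatorElement_self]; exact one_mem _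
  rw [commutator_def, Subgroup.commutator_le]
  intro x _ y _
  have left_generator : ∀ v ∈ ({a, b} : Set G), ⁅x, v⁆ ∈ Subgroup.zpowers ⁅a, b⁆ :=
    fun v hv => mem_of_generators (H := (Subgroup.zpowers ⁅a, b⁆).comap (commutatorLeftHom h2 v))
      (fun u hu => on_generators u hu v hv) x
  exact mem_of_generators (H := (Subgroup.zpowers ⁅a, b⁆).comap (commutatorRightHom h2 x))
    left_generator y

theorem IA_le_Inn_of_closure_pair_eq_top (h2 : commutator G ≤ Subgroup.center G)
    {a b : G} (hab : Subgroup.closure {a, b} = ⊤) : IA G ≤ Inn G := by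
  intro α hα
  have shift (x : G) : ∃ m : ℤ, α x = ⁅a, b⁆ ^ m * x := by
    obtain ⟨m, hm⟩ := Subgroup.mem_zpowers_iff.mp
      (commutator_le_zpowers_of_closure_pair_eq_top h2 hab (hα x))
    refine ⟨m, ?_⟩
    rw [((commute_commutatorElement h2 a b x).zpow_left m).eq, hm, mul_inv_cancel_left]
  obtain ⟨m, hαa⟩ := shift a
  obtain ⟨n, hαb⟩ := shift b
  refine ⟨a ^ n * b ^ (-m), MulEquiv.toMonoidHom_injective (MonoidHom.eq_of_eqOn_dense hab ?_)⟩
  rintro x (rfl | rfl)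
  · show MulAut.conj _ x = α x
    rw [MulAut.conj_apply_eq_commutatorElement_mul, hαa, commutatorElement_zpow_mul_zpow_left h2,
      commutatorElement_self, one_zpow, one_mul, ← commutatorElement_inv, inv_zpow', neg_neg]
  · show MulAut.conj _ x = α x
    rw [MulAut.conj_apply_eq_commutatorElement_mul, hαb, commutatorElement_zpow_mul_zpow_left h2,
      commutatorElement_self, one_zpow, mul_one]

end

theorem IA_iso_Inn_of_two_generated_torsionFree_general (G : Type*) [Group G]
    (h2 : commutator G ≤ Subgroup.center G)
    (hgen : ∃ a b : G, Subgroup.closure {a, b} = ⊤) :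
    Nonempty (IA G ≃* Inn G) := by
  obtain ⟨a, b, hab⟩ := hgen
  exact ⟨MulEquiv.subgroupCongr ((IA_le_Inn_of_closure_pair_eq_top h2 hab).antisymm Inn_le_IA)⟩

/-- In a 2-generated torsion-free nilpotent group of class at most 2,
`IA(G) ≅ Inn(G)`. -/
theorem IA_iso_Inn_of_two_generated_torsionFree (G : Type*) [Group G]
    (htf : Monoid.IsTorsionFree G)
    (h2 : commutator G ≤ Subgroup.center G)
    (hgen : ∃ a b : G, Subgroup.closure {a, b} = ⊤) :
    Nonempty (IA G ≃* Inn G) :=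
  IA_iso_Inn_of_two_generated_torsionFree_general G h2 hgen
end
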